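/- arXiv:2504.01124 — 7 statements merged into one kernel-verified Lean document; each statement's English description precedes it below -/
import Mathlib

section
/- Let A be a distributive nearlattice. If every annihilator a⊤ = {x : x ∨ a = 1} is a principal filter, then A is quasicomplemented, i.e., for each a ∈ A there exists b ∈ A with a⊤⊤ = b⊤. -/
/-- A distributive nearlattice, presented (following Araújo–Kinyon) as a
join-semilattice with top together with its canonical ternary operation
`m x y z = (x ⊔ z) ⊓_z (y ⊔ z)` (the meet taken in the principal filter `[z)`),
satisfying the Araújo–Kinyon identities.  This is equivalent to: every
principal filter is a bounded distributive lattice. -/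
class DNearlattice (A : Type*) extends SemilatticeSup A, OrderTop A where
  m : A → A → A → A
  sup_eq_m : ∀ x y : A, x ⊔ y = m x x y
  m_ax2 : ∀ x y : A, m x y x = x
  m_ax3 : ∀ u w x y z : A,
    m (m x y z) (m y (m u x z) z) w = m w w (m y (m x u z) z)
  m_ax4 : ∀ w x y z : A,
    m x (m y y z) w = m (m x y w) (m x y w) (m x z w)

variable {A : Type*} [DNearlattice A]

/-- The annihilator `a⊤ = {x | x ⊔ a = ⊤}`. -/
def ann (a : A) : Set A := {x : A | x ⊔ a = ⊤}

/-- The annihilator of a set (filter): `F⊤ = {x | ∀ f ∈ F, x ⊔ f = ⊤}`. -/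
def annF (F : Set A) : Set A := {x : A | ∀ f ∈ F, x ⊔ f = ⊤}

/-- The double annihilator `a⊤⊤`. -/
def dann (a : A) : Set A := annF (ann a)

/-- A filter: contains `⊤`, is upward closed, and is closed under existing
binary meets (greatest lower bounds). -/
def IsFil (F : Set A) : Prop :=
  ⊤ ∈ F ∧ (∀ a b : A, a ≤ b → a ∈ F → b ∈ F) ∧
    (∀ a b c : A, a ∈ F → b ∈ F → IsGLB {a, b} c → c ∈ F)

/-- The filter generated by a set: the intersection of all filters containing it. -/
def filGen (X : Set A) : Set A := ⋂₀ {F : Set A | IsFil F ∧ X ⊆ F}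

/-- The join of two filters in the lattice of filters. -/
def filJoin (F G : Set A) : Set A := filGen (F ∪ G)

/-- An ideal: downward closed and closed under joins. -/
def IsIdl (I : Set A) : Prop :=
  (∀ a b : A, a ≤ b → b ∈ I → a ∈ I) ∧ (∀ a b : A, a ∈ I → b ∈ I → a ⊔ b ∈ I)

/-- A prime ideal: a nonempty proper ideal such that whenever an existing
meet `a ∧ b` lies in it, `a` or `b` lies in it. -/
def IsPrimeIdl (P : Set A) : Prop :=
  IsIdl P ∧ P.Nonempty ∧ P ≠ Set.univ ∧
    (∀ a b c : A, IsGLB {a, b} c → c ∈ P → a ∈ P ∨ b ∈ P)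

/-- A maximal ideal: a nonempty proper ideal maximal among proper ideals. -/
def IsMaxIdl (I : Set A) : Prop :=
  IsIdl I ∧ I.Nonempty ∧ I ≠ Set.univ ∧
    (∀ J : Set A, IsIdl J → I ⊆ J → J = I ∨ J = Set.univ)

/-- A prime filter: `a ⊔ b ∈ F` implies `a ∈ F` or `b ∈ F`. -/
def IsPrimeFil (F : Set A) : Prop :=
  IsFil F ∧ ∀ a b : A, a ⊔ b ∈ F → a ∈ F ∨ b ∈ F

/-- An α-filter: a filter containing `a⊤⊤` for each of its elements `a`. -/
def IsAlphaFil (F : Set A) : Prop := IsFil F ∧ ∀ a ∈ F, dann a ⊆ F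

/-- An α-ideal: an ideal `I` such that `I ∩ a⊤⊤ ≠ ∅` implies `a ∈ I`. -/
def IsAlphaIdl (I : Set A) : Prop :=
  IsIdl I ∧ ∀ a : A, (I ∩ dann a).Nonempty → a ∈ I

/-- Quasicomplemented: every `a⊤⊤` is of the form `b⊤`. -/
def Quasicomplemented (B : Type*) [DNearlattice B] : Prop :=
  ∀ a : B, ∃ b : B, dann a = ann b

/-- Normal: `(a ⊔ b)⊤ = a⊤ ⋎ b⊤` for all `a, b`. -/
def NormalNL (B : Type*) [DNearlattice B] : Prop :=
  ∀ a b : B, ann (a ⊔ b) = filJoin (ann a) (ann b)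

/-- Stone: `a⊤ ⋎ a⊤⊤ = A` for all `a`. -/
def StoneNL (B : Type*) [DNearlattice B] : Prop :=
  ∀ a : B, filJoin (ann a) (dann a) = Set.univ


/-- If each annihilator is a principal filter, then `A` is quasicomplemented. -/
theorem stmt0 (h : ∀ a : A, ∃ b : A, ann a = Set.Ici b) :
    Quasicomplemented A := by
  intro a
  obtain ⟨b, hb⟩ := h a
  refine ⟨b, ?_⟩
  ext y
  constructor
  · intro hy
    exact hy b (hb ▸ Set.mem_Ici.mpr le_rfl)
  · intro hy f hf
    rw [hb] at hf
    exact top_le_iff.mp (hy ▸ sup_le_sup_left hf y)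
end

section
/- A distributive nearlattice A is quasicomplemented if and only if for each a ∈ A there exists b ∈ A such that a⊤ ∩ b⊤ = {1} and a ∨ b = 1. -/
variable {A : Type*} [DNearlattice A]

/-- `A` is quasicomplemented iff for each `a` there is `b` with
`a⊤ ∩ b⊤ = {⊤}` and `a ⊔ b = ⊤`. -/
theorem stmt1 :
    Quasicomplemented A ↔
      ∀ a : A, ∃ b : A, ann a ∩ ann b = {(⊤ : A)} ∧ a ⊔ b = ⊤ := by
  constructor
  · intro h a
    obtain ⟨b, hb⟩ := h a
    have hab : a ⊔ b = ⊤ := by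
      have ha : a ∈ dann a := fun f hf => by
        rw [sup_comm]; exact hf
      rw [hb] at ha
      exact ha
    refine ⟨b, ?_, hab⟩
    ext x
    simp only [Set.mem_inter_iff, Set.mem_singleton_iff]
    constructor
    · rintro ⟨hxa, hxb⟩
      rw [← hb] at hxb
      have := hxb x hxa
      rwa [sup_idem] at this
    · rintro rfl
      exact ⟨top_sup_eq _, top_sup_eq _⟩
  · intro h a
    obtain ⟨b, hint, hab⟩ := h a
    refine ⟨b, ?_⟩
    ext x
    constructor
    · intro hx
      exact hx b (show b ⊔ a = ⊤ by rw [sup_comm]; exact hab)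
    · intro hx f hf
      have h1 : x ⊔ f ∈ ann a ∩ ann b := by
        constructor
        · show x ⊔ f ⊔ a = ⊤
          rw [sup_assoc, hf, sup_top_eq]
        · show x ⊔ f ⊔ b = ⊤
          rw [sup_right_comm, hx, top_sup_eq]
      rw [hint] at h1
      exact h1
end

section
/- Let A be a distributive nearlattice. The map ρ : A → R(A), ρ(x) = x⊤, is injective if and only if every filter of A is an α-filter, if and only if every prime filter of A is an α-filter. -/
variable {A : Type*} [DNearlattice A]

open DNearlattice

lemma mE1 (x y z u : A) : m y (m x u z) z ≤ m x y z := by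
  have h := m_ax3 u (m x y z) x y z
  rw [m_ax2] at h
  rw [← sup_eq_m] at h
  exact le_sup_right.trans_eq h.symm

lemma mE2 (y z : A) : m y z z = z := by
  refine le_antisymm ?_ ?_
  · have h := mE1 z y z z
    rwa [m_ax2, m_ax2] at h
  · have h := mE1 y z z z
    rwa [m_ax2] at h

lemma mdist (x y z w : A) : m x (y ⊔ z) w = m x y w ⊔ m x z w := by
  have h := m_ax4 w x y z
  rw [← sup_eq_m, ← sup_eq_m] at h
  exact h

lemma mE5 (x y z : A) : m y x z ⊔ z ≤ m x y z := by
  have h := mE1 x y z x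
  rw [← sup_eq_m, mdist, mE2] at h
  exact h

lemma mM1 (x y z : A) : z ≤ m x y z :=
  le_sup_right.trans (mE5 x y z)

lemma mcomm (x y z : A) : m x y z = m y x z :=
  le_antisymm (le_sup_left.trans (mE5 y x z)) (le_sup_left.trans (mE5 x y z))

lemma mkey (a b w : A) : m (a ⊔ b) a w = a ⊔ w := by
  have h := m_ax3 a w (a ⊔ b) (a ⊔ b) a
  rw [m_ax2, mE2, mE2, ← sup_eq_m, ← sup_eq_m] at h
  rw [sup_right_comm, sup_idem] at h
  rw [h, sup_comm]

lemma mmono2 {y y' : A} (x z : A) (h : y ≤ y') : m x y z ≤ m x y' z := by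
  have hd := mdist x y y' z
  rw [sup_eq_right.mpr h] at hd
  exact le_sup_left.trans_eq hd.symm

lemma mmono1 {x x' : A} (y z : A) (h : x ≤ x') : m x y z ≤ m x' y z := by
  rw [mcomm, mcomm x' y z]; exact mmono2 y z h

lemma mM2a (x y z : A) : m x y z ≤ x ⊔ z :=
  calc m x y z ≤ m x (x ⊔ y) z := mmono2 _ _ le_sup_right
    _ = m (x ⊔ y) x z := mcomm _ _ _
    _ = x ⊔ z := mkey x y z

lemma mM2b (x y z : A) : m x y z ≤ y ⊔ z := (mcomm x y z).trans_le (mM2a y x z)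

lemma mabsR (x y z : A) : m x (y ⊔ z) z = m x y z := by
  rw [mdist, mE2, sup_eq_left.mpr (mM1 x y z)]

lemma mabsL (x y z : A) : m (x ⊔ z) y z = m x y z := by
  rw [mcomm, mabsR, mcomm]

lemma mM3 {w x y z : A} (h1 : w ≤ x ⊔ z) (h2 : w ≤ y ⊔ z) : w ≤ m x y z := by
  have e : m (w ⊔ z) (w ⊔ z) z = w ⊔ z := by
    rw [← sup_eq_m, sup_assoc, sup_idem]
  have : w ⊔ z ≤ m x y z :=
    calc w ⊔ z = m (w ⊔ z) (w ⊔ z) z := e.symm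
      _ ≤ m (w ⊔ z) (y ⊔ z) z := mmono2 _ _ (sup_le h2 le_sup_right)
      _ = m (y ⊔ z) (w ⊔ z) z := mcomm _ _ _
      _ ≤ m (y ⊔ z) (x ⊔ z) z := mmono2 _ _ (sup_le h1 le_sup_right)
      _ = m (x ⊔ z) (y ⊔ z) z := mcomm _ _ _
      _ = m x y z := by rw [mabsL, mabsR]
  exact le_sup_left.trans this

lemma mglb (x y z : A) : IsGLB {x ⊔ z, y ⊔ z} (m x y z) := by
  constructor
  · rintro c (rfl | rfl)
    · exact mM2a x y z
    · exact mM2b x y z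
  · intro c hc
    exact mM3 (hc (Set.mem_insert _ _)) (hc (Set.mem_insert_of_mem _ rfl))

lemma mglb' {a b z : A} (ha : z ≤ a) (hb : z ≤ b) : IsGLB {a, b} (m a b z) := by
  have h := mglb a b z
  rwa [sup_eq_left.mpr ha, sup_eq_left.mpr hb] at h

lemma mupper {u f x y : A} (hx : m u f x ≤ x) (hxy : x ≤ y) : m u f y ≤ y := by
  have hyx : y ⊔ x = y := sup_eq_left.mpr hxy
  have base : m (u ⊔ y) (f ⊔ y) y = m (u ⊔ y) (f ⊔ y) x := by
    have g1 : IsGLB {u ⊔ y, f ⊔ y} (m (u ⊔ y) (f ⊔ y) y) :=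
      mglb' le_sup_right le_sup_right
    have g2 : IsGLB {u ⊔ y, f ⊔ y} (m (u ⊔ y) (f ⊔ y) x) := by
      have h := mglb (u ⊔ y) (f ⊔ y) x
      rwa [sup_assoc, hyx, sup_assoc, hyx] at h
    exact g1.unique g2
  have b1 : m (u ⊔ y) (f ⊔ y) x ≤ m u f x ⊔ y := by
    rw [mcomm, mdist]
    apply sup_le
    · rw [mcomm, mdist]
      apply sup_le le_sup_left
      exact ((mM2b u y x).trans hyx.le).trans le_sup_right
    · exact ((mM2b (f ⊔ y) y x).trans hyx.le).trans le_sup_right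
  calc m u f y = m (u ⊔ y) (f ⊔ y) y := by rw [mabsL, mabsR]
    _ = m (u ⊔ y) (f ⊔ y) x := base
    _ ≤ m u f x ⊔ y := b1
    _ ≤ y := sup_le (hx.trans hxy) le_rfl

lemma mstep {u f b c : A} (hc : m u f b ≤ b) (hub : c ≤ u ⊔ b) (hfb : c ≤ f ⊔ b) : c ≤ b :=
  (mM3 hub hfb).trans hc

/-- The filter extension `G_u` used in the prime separation argument. -/
lemma Gu_spec {M : Set A} (hM : IsFil M) (u : A) :
    IsFil {x : A | ∃ f ∈ M, m u f x ≤ x} ∧ M ⊆ {x : A | ∃ f ∈ M, m u f x ≤ x} ∧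
      u ∈ {x : A | ∃ f ∈ M, m u f x ≤ x} := by
  refine ⟨⟨⟨⊤, hM.1, le_top⟩, ?_, ?_⟩, ?_, ⟨⊤, hM.1, (m_ax2 u ⊤).le⟩⟩
  · rintro x y hxy ⟨f, hf, hfx⟩
    exact ⟨f, hf, mupper hfx hxy⟩
  · rintro x₁ x₂ c ⟨f, hf, h1⟩ ⟨g, hg, h2⟩ hglb
    have hc1 : c ≤ x₁ := hglb.1 (Set.mem_insert _ _)
    have hc2 : c ≤ x₂ := hglb.1 (Set.mem_insert_of_mem _ rfl)
    have hfc : f ⊔ c ∈ M := hM.2.1 f (f ⊔ c) le_sup_left hf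
    have hgc : g ⊔ c ∈ M := hM.2.1 g (g ⊔ c) le_sup_left hg
    set h : A := m (f ⊔ c) (g ⊔ c) c with hh
    have hmem : h ∈ M := hM.2.2 _ _ _ hfc hgc (mglb' le_sup_right le_sup_right)
    refine ⟨h, hmem, ?_⟩
    have key : ∀ x' f' : A, c ≤ x' → h ≤ f' ⊔ c → m u f' x' ≤ x' → m u h c ≤ x' := by
      intro x' f' hcx hhf hmf
      have l1 : m u h c ≤ u ⊔ x' := (mM2a u h c).trans (sup_le le_sup_left (hcx.trans le_sup_right))
      have l2 : m u h c ≤ f' ⊔ x' := by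
        refine (mM2b u h c).trans (sup_le (hhf.trans ?_) (hcx.trans le_sup_right))
        exact sup_le le_sup_left (hcx.trans le_sup_right)
      exact (mM3 l1 l2).trans hmf
    have k1 : m u h c ≤ x₁ :=
      key x₁ f hc1 ((mM2a (f ⊔ c) (g ⊔ c) c).trans (by rw [sup_assoc, sup_idem])) h1
    have k2 : m u h c ≤ x₂ :=
      key x₂ g hc2 ((mM2b (f ⊔ c) (g ⊔ c) c).trans (by rw [sup_assoc, sup_idem])) h2
    exact hglb.2 (by rintro r (rfl | rfl) <;> assumption)
  · intro f hf
    exact ⟨f, hf, (mM2b u f f).trans (by rw [sup_idem])⟩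

/-- Prime filter separation. -/
lemma prime_sep {a b : A} (hab : ¬ a ≤ b) :
    ∃ F : Set A, IsPrimeFil F ∧ a ∈ F ∧ b ∉ F := by
  set S : Set (Set A) := {G | IsFil G ∧ a ∈ G ∧ b ∉ G} with hS
  have base : {x : A | a ≤ x} ∈ S := by
    refine ⟨⟨le_top, fun p q hpq hp => hp.trans hpq, ?_⟩, le_refl a, hab⟩
    intro p q c hp hq hg
    exact hg.2 (by rintro r (rfl | rfl) <;> assumption)
  have chainub : ∀ c ⊆ S, IsChain (· ⊆ ·) c → c.Nonempty → ∃ ub ∈ S, ∀ s ∈ c, s ⊆ ub := by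
    rintro c hcS hchain ⟨F0, hF0⟩
    refine ⟨⋃₀ c, ⟨⟨Set.mem_sUnion.mpr ⟨F0, hF0, (hcS hF0).1.1⟩, ?_, ?_⟩, Set.mem_sUnion.mpr ⟨F0, hF0, (hcS hF0).2.1⟩, ?_⟩, fun s hs => Set.subset_sUnion_of_mem hs⟩
    · rintro p q hpq ⟨F, hF, hp⟩
      exact ⟨F, hF, (hcS hF).1.2.1 p q hpq hp⟩
    · rintro p q r ⟨F, hF, hp⟩ ⟨G, hG, hq⟩ hglb
      rcases hchain.total hF hG with hFG | hGF
      · exact ⟨G, hG, (hcS hG).1.2.2 p q r (hFG hp) hq hglb⟩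
      · exact ⟨F, hF, (hcS hF).1.2.2 p q r hp (hGF hq) hglb⟩
    · rintro ⟨F, hF, hb⟩
      exact (hcS hF).2.2 hb
  obtain ⟨M, -, hMmax⟩ := zorn_subset_nonempty S chainub _ base
  · obtain ⟨hMfil, haM, hbM⟩ := hMmax.prop
    have hmax : ∀ G ∈ S, M ⊆ G → G ⊆ M := fun G hG hMG => hMmax.le_of_ge hG hMG
    refine ⟨M, ⟨hMfil, ?_⟩, haM, hbM⟩
    intro u v huv
    by_contra hcon
    push_neg at hcon
    obtain ⟨hu, hv⟩ := hcon
    -- Extend M by u and by v; both extensions must contain b by maximality.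
    have getb : ∀ w : A, w ∉ M → ∃ f ∈ M, m w f b ≤ b := by
      intro w hw
      obtain ⟨hGfil, hMG, hwG⟩ := Gu_spec hMfil w
      have hbG : b ∈ {x : A | ∃ f ∈ M, m w f x ≤ x} := by
        by_contra hbG
        have hGS : {x : A | ∃ f ∈ M, m w f x ≤ x} ∈ S := ⟨hGfil, hMG haM, hbG⟩
        exact hw (hmax _ hGS hMG hwG)
      exact hbG
    obtain ⟨f, hf, hfb⟩ := getb u hu
    obtain ⟨g, hg, hgb⟩ := getb v hv
    -- now derive b ∈ M
    have hfc : f ⊔ b ∈ M := hMfil.2.1 f _ le_sup_left hf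
    have hgc : g ⊔ b ∈ M := hMfil.2.1 g _ le_sup_left hg
    set h : A := m (f ⊔ b) (g ⊔ b) b with hh
    have hmem : h ∈ M := hMfil.2.2 _ _ _ hfc hgc (mglb' le_sup_right le_sup_right)
    have huvb : (u ⊔ v) ⊔ b ∈ M := hMfil.2.1 (u ⊔ v) _ le_sup_left huv
    have hb1 : b ≤ h := mM1 _ _ _
    have habs : h ⊔ b = h := sup_eq_left.mpr hb1
    -- m (u ⊔ v) h b = b
    have hmb : m (u ⊔ v) h b = b := by
      refine le_antisymm ?_ (mM1 _ _ _)
      rw [mcomm, mdist]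
      have bound : ∀ w f' : A, h ≤ f' ⊔ b → m w f' b ≤ b → m h w b ≤ b := by
        intro w f' hhf hw
        have l1 : m h w b ≤ w ⊔ b := mM2b h w b
        have l2 : m h w b ≤ f' ⊔ b := by
          refine (mM2a h w b).trans ?_
          rw [habs]
          exact hhf
        exact (mM3 l1 l2).trans hw
      have hhf : h ≤ f ⊔ b := (mM2a (f ⊔ b) (g ⊔ b) b).trans (by rw [sup_assoc, sup_idem])
      have hhg : h ≤ g ⊔ b := (mM2b (f ⊔ b) (g ⊔ b) b).trans (by rw [sup_assoc, sup_idem])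
      exact sup_le (bound u f hhf hfb) (bound v g hhg hgb)
    have hglbb : IsGLB {(u ⊔ v) ⊔ b, h} b := by
      have := mglb (u ⊔ v) h b
      rwa [habs, hmb] at this
    exact hbM (hMfil.2.2 _ _ _ huvb hmem hglbb)


lemma mem_ann_iff {x a : A} : x ∈ ann a ↔ x ⊔ a = ⊤ := Iff.rfl

lemma self_mem_dann (a : A) : a ∈ dann a := by
  intro f hf
  rw [sup_comm]; exact hf

lemma principal_isFil (a : A) : IsFil {x : A | a ≤ x} := by
  refine ⟨le_top, fun p q hpq hp => hp.trans hpq, ?_⟩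
  intro p q c hp hq hg
  exact hg.2 (by rintro r (rfl | rfl) <;> assumption)

/-- Injectivity of `ρ` implies every filter is an `α`-filter. -/
lemma inj_to_alpha (hinj : Function.Injective (fun a : A => ann a)) :
    ∀ F : Set A, IsFil F → IsAlphaFil F := by
  intro F hF
  refine ⟨hF, fun a ha x hx => ?_⟩
  have key : ann (x ⊔ a) = ann x := by
    ext y
    constructor
    · intro hy
      have hyx : y ⊔ x ∈ ann a := by
        rw [mem_ann_iff, sup_assoc]
        exact hy
      have := hx (y ⊔ x) hyx
      rw [← sup_assoc, sup_comm x y, sup_assoc, sup_idem] at this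
      exact this
    · intro hy
      show y ⊔ (x ⊔ a) = ⊤
      rw [← sup_assoc, (mem_ann_iff.mp hy : y ⊔ x = ⊤), top_sup_eq]
  have hxa : x ⊔ a = x := hinj key
  exact hF.2.1 a x (le_sup_right.trans_eq hxa) ha

/-- If every filter is an `α`-filter then `ρ` is injective. -/
lemma alpha_to_inj (h : ∀ F : Set A, IsFil F → IsAlphaFil F) :
    Function.Injective (fun a : A => ann a) := by
  intro p q hpq
  simp only at hpq
  have key : ∀ r s : A, ann r = ann s → r ≤ s := by
    intro r s hrs
    have hs : s ∈ dann r := by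
      intro f hf
      have hf' : f ∈ ann s := hrs ▸ hf
      rw [sup_comm]; exact hf'
    have := (h _ (principal_isFil r)).2 r le_rfl hs
    exact this
  exact le_antisymm (key p q hpq) (key q p hpq.symm)

/-- If every prime filter is an `α`-filter then `ρ` is injective. -/
lemma prime_alpha_to_inj (h : ∀ F : Set A, IsPrimeFil F → IsAlphaFil F) :
    Function.Injective (fun a : A => ann a) := by
  intro p q hpq
  simp only at hpq
  by_contra hne
  have key : ∀ r s : A, ann r = ann s → ¬ r ≤ s → False := by
    intro r s hrs hle
    obtain ⟨F, hFprime, hrF, hsF⟩ := prime_sep hle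
    apply hsF
    refine (h F hFprime).2 r hrF ?_
    intro f hf
    have hf' : f ∈ ann s := hrs ▸ hf
    rw [sup_comm]; exact hf'
  rcases (not_and_or.mp (fun hc : p ≤ q ∧ q ≤ p => hne (le_antisymm hc.1 hc.2))) with h1 | h1
  · exact key p q hpq h1
  · exact key q p hpq.symm h1

/-- `ρ : a ↦ a⊤` is injective iff every filter is an α-filter, iff every
prime filter is an α-filter. -/
theorem stmt3 :
    (Function.Injective (fun a : A => ann a) ↔
      ∀ F : Set A, IsFil F → IsAlphaFil F) ∧
    (Function.Injective (fun a : A => ann a) ↔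
      ∀ F : Set A, IsPrimeFil F → IsAlphaFil F) := by
  constructor
  · exact ⟨inj_to_alpha, alpha_to_inj⟩
  · exact ⟨fun hinj F hF => inj_to_alpha hinj F hF.1, prime_alpha_to_inj⟩
end

section
/- Let A be a normal and quasicomplemented distributive nearlattice. Then R(A) = {a⊤ : a ∈ A}, with the operations inherited from the filter lattice, is a Boolean algebra: every element of R(A) has a complement in R(A). -/
variable {A : Type*} [DNearlattice A]

/-- In a normal and quasicomplemented distributive nearlattice, every element
`a⊤` of `R(A)` has a complement in `R(A)`: `R(A)` is a Boolean algebra. -/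
theorem stmt5 (hn : NormalNL A) (hq : Quasicomplemented A) :
    ∀ a : A, ∃ b : A,
      ann a ∩ ann b = {(⊤ : A)} ∧ filJoin (ann a) (ann b) = Set.univ := by
  intro a
  obtain ⟨b, hb⟩ := hq a
  have hadann : a ∈ dann a := by
    intro f hf
    rw [sup_comm]; exact hf
  refine ⟨b, ?_, ?_⟩
  · ext x
    constructor
    · rintro ⟨hxa, hxb⟩
      rw [← hb] at hxb
      have := hxb x hxa
      simpa using this
    · rintro rfl
      refine ⟨by simp [ann], ?_⟩
      rw [← hb]
      intro f hf; simp
  · have hab : a ⊔ b = ⊤ := by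
      rw [hb] at hadann
      exact hadann
    rw [← hn a b, hab]
    ext x; simp [ann]
end

section
/- Let A be a quasicomplemented distributive nearlattice, P a maximal ideal, and a, b ∈ A. If (a⊤ ∩ b⊤)⊤ ∩ P ≠ ∅, then a ∈ P or b ∈ P. -/
variable {A : Type*} [DNearlattice A]

/-- If `P` is a maximal ideal and `a ∉ P`, there is `p ∈ P` with `p ⊔ a = ⊤`. -/
lemma maxIdl_join {P : Set A} (hP : IsMaxIdl P) (a : A) (ha : a ∉ P) :
    ∃ p ∈ P, p ⊔ a = ⊤ := by
  obtain ⟨⟨hdown, hjoin⟩, hne, hproper, hmax⟩ := hP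
  set J : Set A := {x : A | ∃ p ∈ P, x ≤ p ⊔ a} with hJ
  have hJidl : IsIdl J := by
    constructor
    · rintro x y hxy ⟨p, hpP, hy⟩
      exact ⟨p, hpP, hxy.trans hy⟩
    · rintro x y ⟨p, hpP, hx⟩ ⟨q, hqP, hy⟩
      exact ⟨p ⊔ q, hjoin p q hpP hqP,
        sup_le (hx.trans (sup_le_sup_right le_sup_left a))
          (hy.trans (sup_le_sup_right le_sup_right a))⟩
  have hPJ : P ⊆ J := fun p hp => ⟨p, hp, le_sup_left⟩
  have haJ : a ∈ J := by
    obtain ⟨p, hp⟩ := hne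
    exact ⟨p, hp, le_sup_right⟩
  rcases hmax J hJidl hPJ with hJP | hJu
  · exact absurd (hJP ▸ haJ) ha
  · have : (⊤ : A) ∈ J := hJu ▸ Set.mem_univ ⊤
    obtain ⟨p, hpP, hp⟩ := this
    exact ⟨p, hpP, top_le_iff.mp hp⟩

/-- In a quasicomplemented distributive nearlattice, if a maximal ideal `P`
meets `(a⊤ ∩ b⊤)⊤`, then `a ∈ P` or `b ∈ P`. -/
theorem stmt7 (hq : Quasicomplemented A) (P : Set A) (hP : IsMaxIdl P)
    (a b : A) (h : (annF (ann a ∩ ann b) ∩ P).Nonempty) :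
    a ∈ P ∨ b ∈ P := by
  by_contra hab
  push_neg at hab
  obtain ⟨ha, hb⟩ := hab
  obtain ⟨⟨hdown, hjoin⟩, hne, hproper, hmax⟩ := hP
  obtain ⟨p, hpP, hpa⟩ := maxIdl_join ⟨⟨hdown, hjoin⟩, hne, hproper, hmax⟩ a ha
  obtain ⟨q, hqP, hqb⟩ := maxIdl_join ⟨⟨hdown, hjoin⟩, hne, hproper, hmax⟩ b hb
  obtain ⟨c, hcann, hcP⟩ := h
  have hpq : p ⊔ q ∈ P := hjoin p q hpP hqP
  have hpqa : (p ⊔ q) ⊔ a = ⊤ := top_le_iff.mp (hpa ▸ sup_le_sup_right le_sup_left a)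
  have hpqb : (p ⊔ q) ⊔ b = ⊤ := top_le_iff.mp (hqb ▸ sup_le_sup_right le_sup_right b)
  have hc : c ⊔ (p ⊔ q) = ⊤ := hcann (p ⊔ q) ⟨hpqa, hpqb⟩
  have htop : (⊤ : A) ∈ P := hc ▸ hjoin c (p ⊔ q) hcP hpq
  exact hproper (Set.eq_univ_of_forall fun x => hdown x ⊤ le_top htop)
end

section
/- Let A be a normal and quasicomplemented distributive nearlattice. The maps I ↦ F_I = {x : ∃ i ∈ I, i ∈ x⊤} and F ↦ I_F = {x : ∃ f ∈ F, x⊤ ⊆ f⊤⊤} establish a one-to-one correspondence between α-ideals and α-filters of A: I = I_{F_I} for every α-ideal I, and F = F_{I_F} for every α-filter F. -/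
variable {A : Type*} [DNearlattice A]

/-- In a normal quasicomplemented distributive nearlattice, `I ↦ F_I` and
`F ↦ I_F` form a one-to-one correspondence between α-ideals and α-filters. -/
theorem stmt11 (hn : NormalNL A) (hq : Quasicomplemented A) :
    (∀ I : Set A, IsAlphaIdl I →
      I = {x : A | ∃ f ∈ {y : A | ∃ i ∈ I, i ∈ ann y}, ann x ⊆ dann f}) ∧
    (∀ F : Set A, IsAlphaFil F →
      F = {y : A | ∃ i ∈ {x : A | ∃ f ∈ F, ann x ⊆ dann f}, i ∈ ann y}) := by
  have self_dann : ∀ x : A, x ∈ dann x := by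
    intro x f hf
    rw [sup_comm]; exact hf
  constructor
  · intro I hI
    ext x
    constructor
    · intro hx
      obtain ⟨b, hb⟩ := hq x
      have hxb : x ⊔ b = ⊤ := by
        have := self_dann x; rw [hb] at this; exact this
      refine ⟨b, ⟨x, hx, hxb⟩, ?_⟩
      intro z hz f hf
      rw [show ann b = dann x from hb.symm] at hf
      rw [sup_comm]
      exact hf z hz
    · rintro ⟨y, ⟨i, hi, hiy⟩, hsub⟩
      refine hI.2 x ⟨i, hi, ?_⟩
      intro g hg
      have hgd : g ∈ dann y := hsub hg
      rw [sup_comm]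
      exact hgd i hiy
  · intro F hF
    ext y
    constructor
    · intro hy
      obtain ⟨b, hb⟩ := hq y
      have hby : b ⊔ y = ⊤ := by
        have := self_dann y; rw [hb] at this
        rw [sup_comm]; exact this
      exact ⟨b, ⟨y, hy, by rw [← hb]⟩, hby⟩
    · rintro ⟨x, ⟨f, hf, hsub⟩, hxy⟩
      have hyx : y ∈ ann x := by
        show y ⊔ x = ⊤; rw [sup_comm]; exact hxy
      exact hF.2 f hf (hsub hyx)
end

section
/- Let A be a normal and quasicomplemented distributive nearlattice and F an α-filter. Then θ(I_F) is the smallest α-ideal-congruence θ with F = ker θ: for any α-ideal J with F = ker θ(J), one has I_F ⊆ J and hence θ(I_F) ⊆ θ(J). -/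
variable {A : Type*} [DNearlattice A]

/-- For an α-filter `F` of a normal quasicomplemented distributive
nearlattice, `θ(I_F)` is the smallest α-ideal-congruence with kernel `F`. -/
theorem stmt13 (hn : NormalNL A) (hq : Quasicomplemented A)
    (F : Set A) (hF : IsAlphaFil F) :
    F = {a : A | ∃ i ∈ {x : A | ∃ f ∈ F, ann x ⊆ dann f}, a ⊔ i = ⊤} ∧
    ∀ J : Set A, IsAlphaIdl J → F = {a : A | ∃ j ∈ J, a ⊔ j = ⊤} →
      {x : A | ∃ f ∈ F, ann x ⊆ dann f} ⊆ J ∧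
      {p : A × A | ∃ i ∈ {x : A | ∃ f ∈ F, ann x ⊆ dann f}, p.1 ⊔ i = p.2 ⊔ i} ⊆
        {p : A × A | ∃ j ∈ J, p.1 ⊔ j = p.2 ⊔ j} := by
  have self_dann : ∀ a : A, a ∈ dann a := by
    intro a y hy
    rw [sup_comm]; exact hy
  constructor
  · ext a
    constructor
    · intro ha
      obtain ⟨b, hb⟩ := hq a
      refine ⟨b, ⟨a, ha, by rw [← hb]⟩, ?_⟩
      have : a ∈ ann b := hb ▸ self_dann a
      exact this
    · rintro ⟨i, ⟨f, hf, hif⟩, hai⟩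
      exact hF.2 f hf (hif hai)
  · intro J hJ hker
    have hIJ : {x : A | ∃ f ∈ F, ann x ⊆ dann f} ⊆ J := by
      rintro x ⟨f, hf, hxf⟩
      have hf' : f ∈ {a : A | ∃ j ∈ J, a ⊔ j = ⊤} := hker ▸ hf
      obtain ⟨j, hj, hfj⟩ := hf'
      obtain ⟨c, hc⟩ := hq x
      have hcx : c ∈ ann x := by
        have : x ∈ ann c := hc ▸ self_dann x
        simpa [ann, sup_comm] using this
      have hcdf : c ∈ dann f := hxf hcx
      have hjann : j ∈ ann f := by simpa [ann, sup_comm] using hfj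
      have : j ∈ dann x := by
        rw [hc]
        show j ⊔ c = ⊤
        rw [sup_comm]; exact hcdf j hjann
      exact hJ.2 x ⟨j, hj, this⟩
    refine ⟨hIJ, ?_⟩
    rintro ⟨a, b⟩ ⟨i, hi, hab⟩
    exact ⟨i, hIJ hi, hab⟩
end
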